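/- arXiv:2508.14587 — 9 statements merged into one kernel-verified Lean document; each statement's English description precedes it below -/
import Mathlib

section
/- Let h_v > 0 and φ > 0 be real numbers. Then every complex number λ satisfying h_v·λ + exp(−φ·λ) = 0 has Re λ < 0 if and only if 2·φ < h_v·π. -/
open Real Set

lemma aux_exists_theta (h_v φ : ℝ) (hh : 0 < h_v) (hφ : 0 < φ)
    (hge : h_v * Real.pi ≤ 2 * φ) :
    ∃ θ ∈ Set.Ico (Real.pi/2) Real.pi,
      φ * (Real.sin θ * Real.exp (θ * Real.cos θ / Real.sin θ)) = h_v * θ := by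
  set g : ℝ → ℝ := fun θ => φ * (Real.sin θ * Real.exp (θ * Real.cos θ / Real.sin θ)) - h_v * θ
    with hg
  have hpi : (0:ℝ) < Real.pi := Real.pi_pos
  have hcont : ContinuousOn g (Set.Icc (Real.pi/2) Real.pi) := by
    have hf : ContinuousOn (fun θ => Real.sin θ * Real.exp (θ * Real.cos θ / Real.sin θ))
        (Set.Icc (Real.pi/2) Real.pi) := by
      intro a ha
      rcases lt_or_eq_of_le ha.2 with hlt | heqa
      · have hs : Real.sin a ≠ 0 := by
          have : 0 < Real.sin a :=
            Real.sin_pos_of_pos_of_lt_pi (lt_of_lt_of_le (by positivity) ha.1) hlt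
          linarith
        exact (Real.continuous_sin.continuousAt.mul
          (Real.continuous_exp.continuousAt.comp
            ((continuousAt_id.mul Real.continuous_cos.continuousAt).div
              Real.continuous_sin.continuousAt hs))).continuousWithinAt
      · -- a = π
        subst heqa
        have hfval : Real.sin Real.pi * Real.exp (Real.pi * Real.cos Real.pi / Real.sin Real.pi) = 0 := by
          simp [Real.sin_pi]
        rw [ContinuousWithinAt, hfval]
        have hub : ∀ θ ∈ Set.Icc (Real.pi/2) Real.pi,
            Real.sin θ * Real.exp (θ * Real.cos θ / Real.sin θ) ≤ Real.sin θ := by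
          intro θ hθ
          have h0θ : (0:ℝ) < θ := lt_of_lt_of_le (by positivity) hθ.1
          have hsθ : 0 ≤ Real.sin θ := Real.sin_nonneg_of_nonneg_of_le_pi h0θ.le hθ.2
          have hcθ : Real.cos θ ≤ 0 :=
            Real.cos_nonpos_of_pi_div_two_le_of_le hθ.1 (by linarith [hθ.2])
          have : θ * Real.cos θ / Real.sin θ ≤ 0 :=
            div_nonpos_iff.mpr (Or.inr ⟨mul_nonpos_of_nonneg_of_nonpos h0θ.le hcθ, hsθ⟩)
          calc Real.sin θ * Real.exp (θ * Real.cos θ / Real.sin θ)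
              ≤ Real.sin θ * 1 := by
                exact mul_le_mul_of_nonneg_left (Real.exp_le_one_iff.mpr this) hsθ
            _ = Real.sin θ := mul_one _
        have hlb : ∀ θ ∈ Set.Icc (Real.pi/2) Real.pi,
            (0:ℝ) ≤ Real.sin θ * Real.exp (θ * Real.cos θ / Real.sin θ) := by
          intro θ hθ
          have h0θ : (0:ℝ) < θ := lt_of_lt_of_le (by positivity) hθ.1
          have hsθ : 0 ≤ Real.sin θ := Real.sin_nonneg_of_nonneg_of_le_pi h0θ.le hθ.2
          positivity
        have hsin : Filter.Tendsto Real.sin (nhdsWithin Real.pi (Set.Icc (Real.pi/2) Real.pi)) (nhds 0) := by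
          have := Real.continuous_sin.continuousWithinAt
            (s := Set.Icc (Real.pi/2) Real.pi) (x := Real.pi)
          rwa [ContinuousWithinAt, Real.sin_pi] at this
        refine tendsto_of_tendsto_of_tendsto_of_le_of_le'
          tendsto_const_nhds hsin ?_ ?_
        · exact Filter.eventually_iff_exists_mem.mpr ⟨_, self_mem_nhdsWithin, hlb⟩
        · exact Filter.eventually_iff_exists_mem.mpr ⟨_, self_mem_nhdsWithin, hub⟩
    exact (continuousOn_const.mul hf).sub (continuousOn_const.mul continuousOn_id)
  have hgpi : g Real.pi = -(h_v * Real.pi) := by simp [hg]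
  have hgpi2 : 0 ≤ g (Real.pi/2) := by
    have : Real.sin (Real.pi/2) = 1 := Real.sin_pi_div_two
    have hc : Real.cos (Real.pi/2) = 0 := Real.cos_pi_div_two
    simp [hg, this, hc]
    linarith
  have hsub := intermediate_value_Icc' (by linarith : Real.pi/2 ≤ Real.pi) hcont
  have h0mem : (0:ℝ) ∈ Set.Icc (g Real.pi) (g (Real.pi/2)) := by
    constructor
    · rw [hgpi]; nlinarith
    · exact hgpi2
  obtain ⟨θ, hθmem, hθ⟩ := hsub h0mem
  have hθ' : φ * (Real.sin θ * Real.exp (θ * Real.cos θ / Real.sin θ)) - h_v * θ = 0 := hθ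
  refine ⟨θ, ⟨hθmem.1, ?_⟩, by linarith [hθ'] ⟩
  · rcases lt_or_eq_of_le hθmem.2 with h | h
    · exact h
    · exfalso
      rw [h] at hθ'
      rw [Real.sin_pi] at hθ'
      nlinarith


/-- For h_v > 0 and φ > 0, every complex root λ of h_v·λ + exp(−φ·λ) = 0 has
Re λ < 0 if and only if 2·φ < h_v·π. -/
theorem stmt_0 (h_v φ : ℝ) (hh_v : 0 < h_v) (hφ : 0 < φ) :
    (∀ l : ℂ, (h_v : ℂ) * l + Complex.exp (-(φ : ℂ) * l) = 0 → l.re < 0) ↔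
      2 * φ < h_v * Real.pi := by
  have hpi := Real.pi_pos
  constructor
  · -- all roots stable → 2φ < h_v π
    intro H
    by_contra hc
    push_neg at hc  -- h_v * π ≤ 2 * φ
    obtain ⟨θ, ⟨hθ1, hθ2⟩, heq⟩ := aux_exists_theta h_v φ hh_v hφ hc
    have h0θ : (0:ℝ) < θ := lt_of_lt_of_le (by positivity) hθ1
    have hs : 0 < Real.sin θ := Real.sin_pos_of_pos_of_lt_pi h0θ hθ2
    have hcθ : Real.cos θ ≤ 0 :=
      Real.cos_nonpos_of_pi_div_two_le_of_le hθ1 (by linarith)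
    set E := Real.exp (θ * Real.cos θ / Real.sin θ) with hE
    set x := -(θ/φ) * (Real.cos θ / Real.sin θ) with hx
    set y := θ/φ with hy
    have hx0 : 0 ≤ x := by
      rw [hx]
      have h1 : 0 ≤ θ/φ := by positivity
      have h2 : Real.cos θ / Real.sin θ ≤ 0 :=
        div_nonpos_iff.mpr (Or.inr ⟨hcθ, hs.le⟩)
      nlinarith
    set l : ℂ := ⟨x, y⟩ with hl
    have hroot : (h_v : ℂ) * l + Complex.exp (-(φ : ℂ) * l) = 0 := by
      have hφy : φ * y = θ := by rw [hy]; field_simp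
      have hφx : -(φ * x) = θ * Real.cos θ / Real.sin θ := by
        rw [hx, hy]; field_simp
      have hhvy : h_v * y = Real.sin θ * E := by
        rw [hy]; field_simp; linear_combination (-1 : ℝ) * heq
      have hhvx : h_v * x = -(E * Real.cos θ) := by
        rw [hx, hy]
        field_simp
        linear_combination (Real.cos θ) * heq
      rw [Complex.ext_iff]
      constructor
      · simp [Complex.exp_re, hl, hφy, hφx, hhvx, hE]
      · simp [Complex.exp_im, hl, hφy, hφx, hhvy, hE]; ring
    have := H l hroot
    have : l.re = x := rfl
    linarith [H l hroot]
  · -- 2φ < h_v π → all roots stable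
    intro hc l heq
    by_contra hxneg
    push_neg at hxneg  -- 0 ≤ l.re
    rw [Complex.ext_iff] at heq
    simp [Complex.exp_re, Complex.exp_im] at heq
    obtain ⟨h1, h2⟩ := heq
    set x := l.re with hxdef
    set y := l.im with hydef
    have hex : Real.exp (-(φ * x)) ≤ 1 := by
      rw [Real.exp_le_one_iff]
      nlinarith
    have hexpos : 0 < Real.exp (-(φ * x)) := Real.exp_pos _
    -- |y| version
    have h2' : h_v * |y| = Real.exp (-(φ * x)) * Real.sin (φ * |y|) := by
      rcases abs_cases y with ⟨h, _⟩ | ⟨h, _⟩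
      · rw [h]; linarith
      · simp only [h, mul_neg, Real.sin_neg, mul_neg]; linarith
    have hcoseq : Real.cos (φ * |y|) = Real.cos (φ * y) := by
      rcases abs_cases y with ⟨h, _⟩ | ⟨h, _⟩
      · rw [h]
      · rw [h, mul_neg, Real.cos_neg]
    rcases eq_or_lt_of_le (abs_nonneg y) with hy0 | hy0
    · -- y = 0
      have : y = 0 := abs_eq_zero.mp hy0.symm
      rw [this] at h1
      simp at h1
      nlinarith
    · -- y ≠ 0
      have hsin1 : Real.sin (φ * |y|) ≤ 1 := Real.sin_le_one _
      have hylt : h_v * |y| ≤ 1 := by nlinarith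
      have hargs : φ * |y| < Real.pi / 2 := by
        have : |y| ≤ 1 / h_v := by rw [le_div_iff₀ hh_v]; linarith
        calc φ * |y| ≤ φ * (1 / h_v) := by nlinarith
          _ < Real.pi / 2 := by rw [mul_one_div, div_lt_div_iff₀ hh_v two_pos]; linarith
      have hcospos : 0 < Real.cos (φ * y) := by
        rw [← hcoseq]
        apply Real.cos_pos_of_mem_Ioo
        constructor
        · nlinarith
        · exact hargs
      nlinarith
end

section
/- Let h_v > 0 and φ > 0 be real numbers, let ρ ≥ 0 and ω be real numbers, and suppose λ = ρ + i·ω satisfies h_v·λ + exp(−φ·λ) = 0. Then h_v·π ≤ 2·φ. -/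
/-- If λ = ρ + i·ω with ρ ≥ 0 is a root of h_v·λ + exp(−φ·λ) = 0 (h_v, φ > 0),
then h_v·π ≤ 2·φ. -/
theorem stmt_1 (h_v φ ρ ω : ℝ) (hh_v : 0 < h_v) (hφ : 0 < φ) (hρ : 0 ≤ ρ)
    (hroot : (h_v : ℂ) * ((ρ : ℂ) + (ω : ℂ) * Complex.I) +
      Complex.exp (-(φ : ℂ) * ((ρ : ℂ) + (ω : ℂ) * Complex.I)) = 0) :
    h_v * Real.pi ≤ 2 * φ := by
  have h1 := congrArg Complex.re hroot
  have h2 := congrArg Complex.im hroot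
  simp [Complex.exp_re, Complex.exp_im, Complex.add_re, Complex.add_im,
    Complex.mul_re, Complex.mul_im] at h1 h2
  have hexp : Real.exp (-(φ * ρ)) ≤ 1 := by
    rw [Real.exp_le_one_iff]
    nlinarith
  have hcos : Real.cos (φ * ω) ≤ 0 := by
    by_contra h
    push_neg at h
    nlinarith [Real.exp_pos (-(φ * ρ)), mul_nonneg hh_v.le hρ,
      mul_pos (Real.exp_pos (-(φ * ρ))) h]
  have hpi : Real.pi / 2 ≤ |φ * ω| := by
    by_contra h
    push_neg at h
    rw [abs_lt] at h
    have := Real.cos_pos_of_mem_Ioo (Set.mem_Ioo.mpr ⟨h.1, h.2⟩)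
    linarith
  have habs : h_v * |ω| ≤ 1 := by
    have heq : h_v * ω = Real.exp (-(φ * ρ)) * Real.sin (φ * ω) := by linarith
    calc h_v * |ω| = |h_v * ω| := by rw [abs_mul, abs_of_pos hh_v]
      _ = Real.exp (-(φ * ρ)) * |Real.sin (φ * ω)| := by
          rw [heq, abs_mul, abs_of_pos (Real.exp_pos _)]
      _ ≤ 1 * 1 := by
          apply mul_le_mul hexp (Real.abs_sin_le_one _) (abs_nonneg _) zero_le_one
      _ = 1 := one_mul 1
  rw [abs_mul, abs_of_pos hφ] at hpi
  nlinarith [mul_le_mul_of_nonneg_left hpi hh_v.le,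
    mul_le_mul_of_nonneg_left habs hφ.le, abs_nonneg ω]
end

section
/- Let h_v > 0 and φ > 0 be real numbers. Then the inequality |i·ω·h_v + exp(−i·ω·φ)| ≥ 1 holds for all real ω > 0 if and only if h_v ≥ 2·φ. -/
open Complex in
lemma stmt_2_aux (h_v φ ω : ℝ) (hh_v : 0 < h_v) (hω : 0 < ω) :
    (1 ≤ ‖Complex.I * (ω : ℂ) * (h_v : ℂ) +
        Complex.exp (-(Complex.I * (ω : ℂ) * (φ : ℂ)))‖) ↔
      2 * Real.sin (ω * φ) ≤ ω * h_v := by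
  have hz : Complex.I * (ω : ℂ) * (h_v : ℂ) + Complex.exp (-(Complex.I * (ω : ℂ) * (φ : ℂ)))
      = (Real.cos (ω * φ) : ℂ) + ((ω * h_v - Real.sin (ω * φ) : ℝ) : ℂ) * Complex.I := by
    rw [show -(Complex.I * (ω : ℂ) * (φ : ℂ)) = ((-(ω * φ) : ℝ) : ℂ) * Complex.I by
      push_cast; ring]
    rw [Complex.exp_mul_I]
    push_cast [Complex.cos_neg, Complex.sin_neg]
    ring
  rw [hz, Complex.norm_add_mul_I]
  rw [Real.one_le_sqrt]
  have hs : Real.cos (ω * φ) ^ 2 + (ω * h_v - Real.sin (ω * φ)) ^ 2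
      = 1 + (ω * h_v) * (ω * h_v - 2 * Real.sin (ω * φ)) := by
    have := Real.sin_sq_add_cos_sq (ω * φ)
    nlinarith [this]
  rw [hs]
  constructor
  · intro h
    nlinarith [mul_pos hω hh_v, Real.sin_le_one (ω * φ), Real.neg_one_le_sin (ω * φ)]
  · intro h
    nlinarith [mul_pos hω hh_v]

/-- For h_v > 0 and φ > 0: |i·ω·h_v + exp(−i·ω·φ)| ≥ 1 for all ω > 0 iff h_v ≥ 2·φ. -/
theorem stmt_2 (h_v φ : ℝ) (hh_v : 0 < h_v) (hφ : 0 < φ) :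
    (∀ ω : ℝ, 0 < ω →
      1 ≤ ‖Complex.I * (ω : ℂ) * (h_v : ℂ) +
        Complex.exp (-(Complex.I * (ω : ℂ) * (φ : ℂ)))‖) ↔
      h_v ≥ 2 * φ := by
  have hred : (∀ ω : ℝ, 0 < ω →
      1 ≤ ‖Complex.I * (ω : ℂ) * (h_v : ℂ) +
        Complex.exp (-(Complex.I * (ω : ℂ) * (φ : ℂ)))‖) ↔
      (∀ ω : ℝ, 0 < ω → 2 * Real.sin (ω * φ) ≤ ω * h_v) := by
    constructor
    · intro h ω hω
      exact (stmt_2_aux h_v φ ω hh_v hω).1 (h ω hω)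
    · intro h ω hω
      exact (stmt_2_aux h_v φ ω hh_v hω).2 (h ω hω)
  rw [hred]
  constructor
  · intro h
    refine le_of_forall_pos_le_add fun ε hε => ?_
    set ω : ℝ := min (1 / φ) (Real.sqrt (ε / φ ^ 3)) with hωdef
    have hω : 0 < ω := lt_min (by positivity) (Real.sqrt_pos.2 (by positivity))
    have h1 : ω * φ ≤ 1 := by
      have : ω ≤ 1 / φ := min_le_left _ _
      calc ω * φ ≤ (1 / φ) * φ := by nlinarith
        _ = 1 := by field_simp
    have h2 : ω ^ 2 ≤ ε / φ ^ 3 := by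
      have : ω ≤ Real.sqrt (ε / φ ^ 3) := min_le_right _ _
      nlinarith [Real.sq_sqrt (le_of_lt (show (0:ℝ) < ε / φ ^ 3 by positivity)),
        Real.sqrt_nonneg (ε / φ ^ 3)]
    have hcube := Real.sin_gt_sub_cube (mul_pos hω hφ)
    have hsin := h ω hω
    -- ω h_v ≥ 2 sin(ωφ) > 2(ωφ - (ωφ)^3/4)
    have : h_v ≥ 2 * φ - ω ^ 2 * φ ^ 3 / 2 := by nlinarith [hω, pow_pos (mul_pos hω hφ) 3]
    have h3 : ω ^ 2 * φ ^ 3 ≤ ε := by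
      have hφ3 : (0:ℝ) < φ ^ 3 := by positivity
      calc ω ^ 2 * φ ^ 3 ≤ (ε / φ ^ 3) * φ ^ 3 := by nlinarith
        _ = ε := by field_simp
    linarith
  · intro h ω hω
    have := Real.sin_le (le_of_lt (mul_pos hω hφ))
    nlinarith
end

section
/- Let h_v > 0 and φ be real numbers and let ω > 0. Then |i·ω·h_v + exp(−i·ω·φ)| ≥ 1 if and only if ω·h_v ≥ 2·sin(ω·φ). -/
/-- For h_v > 0, any φ and ω > 0: |i·ω·h_v + exp(−i·ω·φ)| ≥ 1 iff ω·h_v ≥ 2·sin(ω·φ). -/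
theorem stmt_3 (h_v φ ω : ℝ) (hh_v : 0 < h_v) (hω : 0 < ω) :
    1 ≤ ‖Complex.I * (ω : ℂ) * (h_v : ℂ) +
        Complex.exp (-(Complex.I * (ω : ℂ) * (φ : ℂ)))‖ ↔
      ω * h_v ≥ 2 * Real.sin (ω * φ) := by
  set z : ℂ := Complex.I * (ω : ℂ) * (h_v : ℂ) +
      Complex.exp (-(Complex.I * (ω : ℂ) * (φ : ℂ))) with hz
  have hre : z.re = Real.cos (ω * φ) := by
    simp [hz, Complex.exp_re, Complex.exp_im]
  have him : z.im = ω * h_v - Real.sin (ω * φ) := by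
    simp [hz, Complex.exp_re, Complex.exp_im]; ring
  have hsq : ‖z‖ ^ 2 = 1 + (ω * h_v) ^ 2 - 2 * (ω * h_v) * Real.sin (ω * φ) := by
    rw [Complex.sq_norm, Complex.normSq_apply, hre, him]
    have := Real.sin_sq_add_cos_sq (ω * φ)
    nlinarith
  constructor
  · intro h
    have h2 : 1 ≤ ‖z‖ ^ 2 := by nlinarith
    rw [hsq] at h2
    have hωh : 0 < ω * h_v := mul_pos hω hh_v
    nlinarith
  · intro h
    have hωh : 0 < ω * h_v := mul_pos hω hh_v
    have h2 : 1 ≤ ‖z‖ ^ 2 := by rw [hsq]; nlinarith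
    nlinarith [norm_nonneg z]
end

section
/- Let h_v > 0 and φ > 0 be real numbers. Then 2·sin(ω·φ) ≤ ω·h_v holds for all real ω > 0 if and only if h_v ≥ 2·φ. -/
/-- For h_v > 0 and φ > 0: 2·sin(ω·φ) ≤ ω·h_v for all ω > 0 iff h_v ≥ 2·φ. -/
theorem stmt_4 (h_v φ : ℝ) (hh_v : 0 < h_v) (hφ : 0 < φ) :
    (∀ ω : ℝ, 0 < ω → 2 * Real.sin (ω * φ) ≤ ω * h_v) ↔ h_v ≥ 2 * φ := by
  constructor
  · intro H
    by_contra hlt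
    push_neg at hlt
    set ε := 2 * φ - h_v with hε
    have hεpos : 0 < ε := by linarith
    -- choose small ω
    obtain ⟨ω, hω0, hω1, hω2⟩ : ∃ ω : ℝ, 0 < ω ∧ ω * φ ≤ 1 ∧ ω ^ 2 * φ ^ 3 / 2 < ε := by
      refine ⟨min (1 / φ) (Real.sqrt (ε / φ ^ 3)), ?_, ?_, ?_⟩
      · exact lt_min (by positivity) (Real.sqrt_pos.mpr (by positivity))
      · calc min (1 / φ) (Real.sqrt (ε / φ ^ 3)) * φ ≤ (1 / φ) * φ := by
              apply mul_le_mul_of_nonneg_right (min_le_left _ _) hφ.le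
          _ = 1 := by field_simp
      · have h1 : min (1 / φ) (Real.sqrt (ε / φ ^ 3)) ≤ Real.sqrt (ε / φ ^ 3) :=
          min_le_right _ _
        have h0 : 0 < min (1 / φ) (Real.sqrt (ε / φ ^ 3)) :=
          lt_min (by positivity) (Real.sqrt_pos.mpr (by positivity))
        have h2 : (min (1 / φ) (Real.sqrt (ε / φ ^ 3))) ^ 2 ≤ ε / φ ^ 3 := by
          calc (min (1 / φ) (Real.sqrt (ε / φ ^ 3))) ^ 2
              ≤ (Real.sqrt (ε / φ ^ 3)) ^ 2 := by
                exact pow_le_pow_left₀ h0.le h1 2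
            _ = ε / φ ^ 3 := Real.sq_sqrt (by positivity)
        have : (min (1 / φ) (Real.sqrt (ε / φ ^ 3))) ^ 2 * φ ^ 3 ≤ ε := by
          calc (min (1 / φ) (Real.sqrt (ε / φ ^ 3))) ^ 2 * φ ^ 3
              ≤ (ε / φ ^ 3) * φ ^ 3 := by
                apply mul_le_mul_of_nonneg_right h2 (by positivity)
            _ = ε := by field_simp
        linarith
    have hx : 0 < ω * φ := mul_pos hω0 hφ
    have hsin : ω * φ - (ω * φ) ^ 3 / 4 < Real.sin (ω * φ) :=
      lt_of_le_of_lt (by have := pow_pos hx 3; linarith) (Real.sin_gt_sub_cube hx)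
    have hH := H ω hω0
    have hcube : (ω * φ) ^ 3 = ω * (ω ^ 2 * φ ^ 3) := by ring
    nlinarith [mul_pos hω0 hεpos, sq_nonneg ω, sq_nonneg φ]
  · intro h ω hω
    have : Real.sin (ω * φ) ≤ ω * φ :=
      Real.sin_le (by positivity)
    nlinarith
end

section
/- Let h_v > 0, h_a > 0 and φ > 0 be real numbers with h_a ≥ 2·h_v·φ and h_v² ≥ 2·h_a. Then for every real ω > 0, |1 − h_a·ω²·exp(i·ω·φ) + i·h_v·ω| ≥ 1. -/
/-- If h_a ≥ 2·h_v·φ and h_v² ≥ 2·h_a (with h_v, h_a, φ > 0), then for all ω > 0,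
|1 − h_a·ω²·exp(i·ω·φ) + i·h_v·ω| ≥ 1. -/
theorem stmt_9 (h_v h_a φ : ℝ) (hh_v : 0 < h_v) (hh_a : 0 < h_a) (hφ : 0 < φ)
    (h1 : h_a ≥ 2 * h_v * φ) (h2 : h_v ^ 2 ≥ 2 * h_a) :
    ∀ ω : ℝ, 0 < ω →
      1 ≤ ‖(1 - (h_a : ℂ) * (ω : ℂ) ^ 2 *
            Complex.exp (Complex.I * (ω : ℂ) * (φ : ℂ)) +
          Complex.I * (h_v : ℂ) * (ω : ℂ))‖ := by
  intro ω hω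
  set z : ℂ := 1 - (h_a : ℂ) * (ω : ℂ) ^ 2 *
      Complex.exp (Complex.I * (ω : ℂ) * (φ : ℂ)) +
      Complex.I * (h_v : ℂ) * (ω : ℂ) with hzdef
  set C := Real.cos (ω * φ) with hC
  set S := Real.sin (ω * φ) with hS
  have hre : z.re = 1 - h_a * ω ^ 2 * C := by
    simp [hzdef, hC, Complex.exp_re, Complex.exp_im, ← Complex.ofReal_pow]
  have him : z.im = h_v * ω - h_a * ω ^ 2 * S := by
    simp [hzdef, hS, Complex.exp_re, Complex.exp_im, ← Complex.ofReal_pow]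
    ring
  have hCS : C ^ 2 + S ^ 2 = 1 := by
    rw [hC, hS, add_comm]; exact Real.sin_sq_add_cos_sq _
  have hC1 : C ≤ 1 := Real.cos_le_one _
  have hS1 : S ≤ ω * φ := Real.sin_le (by positivity)
  have key1 : 2 * h_a * h_v * ω * S ≤ h_a ^ 2 * ω ^ 2 := by
    have t1 : 2 * h_a * h_v * ω * S ≤ 2 * h_a * h_v * ω * (ω * φ) :=
      mul_le_mul_of_nonneg_left hS1 (by positivity)
    nlinarith [mul_le_mul_of_nonneg_right h1 (mul_pos hh_a (mul_pos hω hω)).le]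
  have key2 : 2 * h_a * C ≤ h_v ^ 2 := by nlinarith
  have hsq : 1 ≤ Complex.normSq z := by
    rw [Complex.normSq_apply, hre, him]
    nlinarith [mul_nonneg (sq_nonneg ω) (by linarith : (0:ℝ) ≤ h_a ^ 2 * ω ^ 2 - 2 * h_a * h_v * ω * S),
      mul_nonneg (sq_nonneg ω) (by linarith : (0:ℝ) ≤ h_v ^ 2 - 2 * h_a * C),
      sq_nonneg (h_a * ω ^ 2)]
  calc (1:ℝ) = Real.sqrt 1 := (Real.sqrt_one).symm
  _ ≤ Real.sqrt (Complex.normSq z) := Real.sqrt_le_sqrt hsq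
  _ = ‖z‖ := (Complex.norm_def z).symm
end

section
/- Let h_v > 0, h_a > 0 and φ > 0 be real numbers with h_a ≥ 2·h_v·φ and h_v² ≥ 2·h_a. Then for every real ω, h_a²·ω² + h_v² ≥ 2·h_a·cos(ω·φ) + 2·h_a·h_v·ω·sin(ω·φ). -/
/-- If h_a ≥ 2·h_v·φ and h_v² ≥ 2·h_a (with h_v, h_a, φ > 0), then for all real ω,
h_a²·ω² + h_v² ≥ 2·h_a·cos(ω·φ) + 2·h_a·h_v·ω·sin(ω·φ). -/
theorem stmt_11 (h_v h_a φ : ℝ) (hh_v : 0 < h_v) (hh_a : 0 < h_a) (hφ : 0 < φ)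
    (h1 : h_a ≥ 2 * h_v * φ) (h2 : h_v ^ 2 ≥ 2 * h_a) :
    ∀ ω : ℝ, h_a ^ 2 * ω ^ 2 + h_v ^ 2 ≥
      2 * h_a * Real.cos (ω * φ) + 2 * h_a * h_v * ω * Real.sin (ω * φ) := by
  intro ω
  have hc : Real.cos (ω * φ) ≤ 1 := Real.cos_le_one _
  have hs : ω * Real.sin (ω * φ) ≤ ω ^ 2 * φ := by
    calc ω * Real.sin (ω * φ) ≤ |ω * Real.sin (ω * φ)| := le_abs_self _
      _ = |ω| * |Real.sin (ω * φ)| := abs_mul _ _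
      _ ≤ |ω| * |ω * φ| := by
          exact mul_le_mul_of_nonneg_left Real.abs_sin_le_abs (abs_nonneg _)
      _ = |ω| * (|ω| * φ) := by rw [abs_mul, abs_of_pos hφ]
      _ = ω ^ 2 * φ := by rw [← mul_assoc, ← sq_abs, sq]
  nlinarith [mul_le_mul_of_nonneg_left hs (mul_pos hh_a hh_v).le, mul_le_mul_of_nonneg_left h1 (mul_nonneg hh_a.le (sq_nonneg ω)), mul_le_mul_of_nonneg_left hc hh_a.le]
end

section
/- Let n be a finite index type, A an n × n real matrix, B : n → ℝ a vector, T_s > 0 a real number, d a natural number, and φ = d·T_s. Let u : ℝ → ℝ satisfy u(t) = u(k·T_s) for all integers k and all t with k·T_s ≤ t < (k+1)·T_s (zero-order hold), and let x : ℝ → (n → ℝ) be differentiable with x′(t) = A·x(t) + u(t − φ)·B for all t ∈ ℝ. Then for every integer k, x((k+1)·T_s) = exp(T_s·A)·x(k·T_s) + u((k − d)·T_s)·((∫_0^{T_s} exp(σ·A) dσ)·B), where exp denotes the matrix exponential and the matrix acts on vectors by matrix-vector multiplication. -/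
open NormedSpace

section Aux
variable {n : Type*} [Fintype n] [DecidableEq n]

theorem aux_slope (A : Matrix n n ℝ) (s : ℝ) :
    Filter.Tendsto (slope (fun σ : ℝ => exp (σ • A)) s) (nhdsWithin s {s}ᶜ)
      (nhds (A * exp (s • A))) := by
  letI : NormedRing (Matrix n n ℝ) := Matrix.linftyOpNormedRing
  letI : NormedAlgebra ℝ (Matrix n n ℝ) := Matrix.linftyOpNormedAlgebra
  letI : CompleteSpace (Matrix n n ℝ) := inferInstanceAs (CompleteSpace (n → n → ℝ))
  have := _root_.hasDerivAt_exp_smul_const' (𝕂 := ℝ) A s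
  rw [hasDerivAt_iff_tendsto_slope] at this
  exact this

theorem aux_exp_cont (A : Matrix n n ℝ) : Continuous (fun σ : ℝ => exp (σ • A)) := by
  letI : NormedRing (Matrix n n ℝ) := Matrix.linftyOpNormedRing
  letI : NormedAlgebra ℝ (Matrix n n ℝ) := Matrix.linftyOpNormedAlgebra
  letI : CompleteSpace (Matrix n n ℝ) := inferInstanceAs (CompleteSpace (n → n → ℝ))
  exact continuous_iff_continuousAt.2 fun s => (_root_.hasDerivAt_exp_smul_const' (𝕂 := ℝ) A s).continuousAt

theorem aux_exp_comm (A : Matrix n n ℝ) (s : ℝ) : Commute A (exp (s • A)) := by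
  letI : NormedRing (Matrix n n ℝ) := Matrix.linftyOpNormedRing
  letI : NormedAlgebra ℝ (Matrix n n ℝ) := Matrix.linftyOpNormedAlgebra
  letI : CompleteSpace (Matrix n n ℝ) := inferInstanceAs (CompleteSpace (n → n → ℝ))
  exact ((Commute.refl A).smul_right s).exp_right

end Aux

attribute [local instance] Matrix.normedAddCommGroup Matrix.normedSpace

section Aux2
variable {n : Type*} [Fintype n] [DecidableEq n]

theorem aux_exp_deriv (A : Matrix n n ℝ) (s : ℝ) :
    HasDerivAt (fun σ : ℝ => exp (σ • A)) (A * exp (s • A)) s := by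
  exact hasDerivAt_iff_tendsto_slope.2 (aux_slope A s)

/-- `Matrix.mulVec` as a continuous bilinear map. -/
noncomputable def mulVecL : Matrix n n ℝ →L[ℝ] (n → ℝ) →L[ℝ] (n → ℝ) :=
  LinearMap.toContinuousLinearMap
    { toFun := fun M => LinearMap.toContinuousLinearMap M.mulVecLin
      map_add' := fun M N => by ext v i; simp [Matrix.add_mulVec]
      map_smul' := fun c M => by ext v i; simp [Matrix.smul_mulVec] }

@[simp] theorem mulVecL_apply (M : Matrix n n ℝ) (v : n → ℝ) :
    mulVecL M v = M.mulVec v := rfl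

end Aux2

open NormedSpace in
/-- Exact one-step discretization of ẋ(t) = A·x(t) + u(t − φ)·B under a zero-order
hold on the input, with delay φ = d·T_s an integer multiple of the sampling time. -/
theorem stmt_13 {n : Type*} [Fintype n] [DecidableEq n]
    (A : Matrix n n ℝ) (B : n → ℝ) (T_s : ℝ) (hT_s : 0 < T_s) (d : ℕ) (φ : ℝ)
    (hφ : φ = d * T_s) (u : ℝ → ℝ)
    (hzoh : ∀ (k : ℤ) (t : ℝ), (k : ℝ) * T_s ≤ t → t < ((k : ℝ) + 1) * T_s →
      u t = u ((k : ℝ) * T_s))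
    (x : ℝ → n → ℝ)
    (hode : ∀ t : ℝ, HasDerivAt x (A.mulVec (x t) + u (t - φ) • B) t) :
    ∀ k : ℤ, x (((k : ℝ) + 1) * T_s) =
      (NormedSpace.exp (T_s • A)).mulVec (x ((k : ℝ) * T_s)) +
        u (((k : ℝ) - (d : ℝ)) * T_s) •
          ((∫ σ in (0 : ℝ)..T_s, NormedSpace.exp (σ • A)).mulVec B) := by
  intro k
  set t0 : ℝ := (k : ℝ) * T_s with ht0
  set u0 : ℝ := u (((k : ℝ) - (d : ℝ)) * T_s) with hu0
  -- the auxiliary function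
  set f : ℝ → n → ℝ := fun τ => mulVecL (exp ((T_s - τ) • A)) (x (t0 + τ)) with hfdef
  -- its derivative
  have hE : ∀ σ : ℝ, HasDerivAt (fun τ : ℝ => exp ((T_s - τ) • A))
      (-(A * exp ((T_s - σ) • A))) σ := by
    intro σ
    have h1 := (aux_exp_deriv A (T_s - σ)).scomp σ ((hasDerivAt_id σ).const_sub T_s)
    simp [Function.comp_def] at h1
    exact h1
  have hx' : ∀ σ : ℝ, HasDerivAt (fun τ : ℝ => x (t0 + τ))
      (A.mulVec (x (t0 + σ)) + u (t0 + σ - φ) • B) σ := by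
    intro σ
    have h1 := (hode (t0 + σ)).scomp σ ((hasDerivAt_id σ).const_add t0)
    simpa [Function.comp_def] using h1
  have hf : ∀ σ : ℝ, HasDerivAt f
      (u (t0 + σ - φ) • (exp ((T_s - σ) • A)).mulVec B) σ := by
    intro σ
    have hc : HasDerivAt (fun τ : ℝ => mulVecL (exp ((T_s - τ) • A)))
        (mulVecL (-(A * exp ((T_s - σ) • A)))) σ := by
      exact mulVecL.hasFDerivAt.comp_hasDerivAt σ (hE σ)
    have h2 := hc.clm_apply (hx' σ)
    have h3 : mulVecL (-(A * exp ((T_s - σ) • A))) (x (t0 + σ)) +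
        mulVecL (exp ((T_s - σ) • A)) (A.mulVec (x (t0 + σ)) + u (t0 + σ - φ) • B) =
        u (t0 + σ - φ) • (exp ((T_s - σ) • A)).mulVec B := by
      have hcomm := (aux_exp_comm A (T_s - σ)).eq
      simp only [mulVecL_apply, Matrix.neg_mulVec, Matrix.mulVec_add, Matrix.mulVec_smul,
        Matrix.mulVec_mulVec, ← hcomm]
      abel
    rw [h3] at h2
    exact h2
  -- the zero-order hold
  have hu : ∀ σ ∈ Set.Ioo (0 : ℝ) T_s, u (t0 + σ - φ) = u0 := by
    intro σ hσ
    have h1 := hzoh (k - d) (t0 + σ - φ) (by push_cast; rw [hφ, ht0]; nlinarith [hσ.1])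
      (by push_cast; rw [hφ, ht0]; nlinarith [hσ.2])
    rw [h1]; congr 1; push_cast; ring
  -- continuity of the integrand
  have hcontvec : Continuous fun σ : ℝ => (exp ((T_s - σ) • A)).mulVec B := by
    have h := (aux_exp_cont A).comp (continuous_const.sub continuous_id : Continuous fun σ : ℝ => T_s - σ)
    exact (mulVecL.continuous.comp h).clm_apply continuous_const
  -- FTC
  have key : (∫ σ in (0 : ℝ)..T_s, u0 • (exp ((T_s - σ) • A)).mulVec B) = f T_s - f 0 := by
    apply intervalIntegral.integral_eq_sub_of_hasDeriv_right_of_le hT_s.le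
    · exact fun σ _ => (hf σ).continuousAt.continuousWithinAt
    · intro σ hσ
      have := (hf σ).hasDerivWithinAt (s := Set.Ioi σ)
      rwa [hu σ hσ] at this
    · exact (hcontvec.const_smul u0).intervalIntegrable _ _
  -- compute endpoints
  have hfT : f T_s = x (t0 + T_s) := by
    simp [hfdef, exp_zero]
  have hf0 : f 0 = (exp (T_s • A)).mulVec (x t0) := by
    simp [hfdef]
  -- compute the integral
  have hint : (∫ σ in (0 : ℝ)..T_s, u0 • (exp ((T_s - σ) • A)).mulVec B)
      = u0 • ((∫ σ in (0 : ℝ)..T_s, exp (σ • A)).mulVec B) := by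
    rw [intervalIntegral.integral_smul]
    congr 1
    have hsub : (∫ σ in (0 : ℝ)..T_s, (exp ((T_s - σ) • A)).mulVec B)
        = ∫ σ in (0 : ℝ)..T_s, (exp (σ • A)).mulVec B := by
      have := intervalIntegral.integral_comp_sub_left
        (a := (0:ℝ)) (b := T_s) (fun σ : ℝ => (exp (σ • A)).mulVec B) T_s
      simpa using this
    rw [hsub]
    letI : ENormedAddMonoid (Matrix n n ℝ) :=
      NormedAddCommGroup.toENormedAddCommMonoid.toENormedAddMonoid
    have hInt : IntervalIntegrable (fun σ : ℝ => exp (σ • A))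
        MeasureTheory.volume (0 : ℝ) T_s := (aux_exp_cont A).intervalIntegrable _ _
    have := (mulVecL.flip B).intervalIntegral_comp_comm hInt (a := (0:ℝ)) (b := T_s)
    exact this
  rw [hint, hfT, hf0] at key
  have hT : t0 + T_s = ((k : ℝ) + 1) * T_s := by rw [ht0]; ring
  rw [hT] at key
  exact sub_eq_iff_eq_add'.mp key.symm
end

section
/- Let n be a finite index type, A an n × n real matrix, B : n → ℝ a vector, T_s > 0 a real number, d a natural number, and φ = d·T_s. Let u : ℝ → ℝ satisfy u(t) = u(k·T_s) for all integers k and all t with k·T_s ≤ t < (k+1)·T_s (zero-order hold), and let x : ℝ → (n → ℝ) be differentiable with x′(t) = A·x(t) + u(t − φ)·B for all t ∈ ℝ. Set Φ = exp(T_s·A) and Γ = (∫_0^{T_s} exp(σ·A) dσ)·B. Then for every integer k, x(k·T_s + d·T_s) = Φ^d·x(k·T_s) + ∑_{j=1}^{d} Φ^{j−1}·Γ·u(k·T_s − j·T_s). -/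
open NormedSpace intervalIntegral MeasureTheory

section aux
variable {n : Type*} [Fintype n] [DecidableEq n]

attribute [local instance] Matrix.linftyOpNormedAddCommGroup Matrix.linftyOpNormedRing
  Matrix.linftyOpNormedAlgebra

noncomputable def mulVecCLM (n : Type*) [Fintype n] [DecidableEq n] :
    Matrix n n ℝ →L[ℝ] (n → ℝ) →L[ℝ] (n → ℝ) :=
  LinearMap.toContinuousLinearMap
  { toFun := fun M => LinearMap.toContinuousLinearMap M.mulVecLin
    map_add' := fun M N => by ext v i; simp [Matrix.add_mulVec]
    map_smul' := fun c M => by ext v i; simp [Matrix.smul_mulVec] }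

@[simp] lemma mulVecCLM_apply (M : Matrix n n ℝ) (v : n → ℝ) :
    mulVecCLM n M v = M.mulVec v := rfl

lemma contExpSmul (A : Matrix n n ℝ) : Continuous (fun s : ℝ => exp (s • A)) :=
  exp_continuous.comp (continuous_id.smul continuous_const)

lemma expAdd (A : Matrix n n ℝ) (a b : ℝ) :
    exp ((a + b) • A) = exp (a • A) * exp (b • A) := by
  rw [add_smul]
  exact exp_add_of_commute (((Commute.refl A).smul_left a).smul_right b)

lemma step_core (A : Matrix n n ℝ) (B : n → ℝ) (φ : ℝ) (u : ℝ → ℝ) (x : ℝ → n → ℝ)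
    (hode : ∀ t : ℝ, HasDerivAt x (A.mulVec (x t) + u (t - φ) • B) t)
    (a b : ℝ) (hab : a ≤ b) (c : ℝ) (hc : ∀ t ∈ Set.Ico a b, u (t - φ) = c) :
    x b = (exp ((b - a) • A)).mulVec (x a) +
      c • ∫ σ in (0:ℝ)..(b - a), (exp (σ • A)).mulVec B := by
  set E : ℝ → Matrix n n ℝ := fun s => exp ((-s) • A) with hE
  have hEd : ∀ t : ℝ, HasDerivAt E ((-1 : ℝ) • (E t * A)) t := by
    intro t
    have h1 := hasDerivAt_exp_smul_const (𝕂 := ℝ) A (-t)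
    have h2 : HasDerivAt (fun s : ℝ => -s) (-1) t := (hasDerivAt_id t).neg
    exact h1.scomp t h2
  have hEc : Continuous E := exp_continuous.comp ((continuous_neg).smul continuous_const)
  set h : ℝ → n → ℝ := fun t => (E t).mulVec (x t) with hh
  have hhd : ∀ t : ℝ, HasDerivAt h (u (t - φ) • (E t).mulVec B) t := by
    intro t
    have hc1 : HasDerivAt (fun s => mulVecCLM n (E s))
        (mulVecCLM n ((-1 : ℝ) • (E t * A))) t :=
      (mulVecCLM n).hasFDerivAt.comp_hasDerivAt t (hEd t)
    have := hc1.clm_apply (hode t)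
    refine this.congr_deriv ?_
    simp [Matrix.mulVec_add, Matrix.mulVec_smul, Matrix.mulVec_mulVec]
  have hBc : Continuous (fun s => (E s).mulVec B) :=
    (((mulVecCLM n).flip B).continuous.comp hEc)
  have hint : IntervalIntegrable (fun s => c • (E s).mulVec B) volume a b :=
    (hBc.const_smul c).intervalIntegrable a b
  have key : (∫ s in a..b, c • (E s).mulVec B) = h b - h a := by
    apply integral_eq_sub_of_hasDeriv_right_of_le hab
    · exact (continuous_iff_continuousAt.2 fun t => (hhd t).continuousAt).continuousOn
    · intro t ht
      have := (hhd t).hasDerivWithinAt (s := Set.Ioi t)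
      rwa [hc t ⟨le_of_lt ht.1, ht.2⟩] at this
    · exact hint
  have hinv : ∀ s : ℝ, exp (s • A) * E s = exp ((s + -s) • A) := fun s => (expAdd A s (-s)).symm
  have hxb : x b = (exp (b • A)).mulVec (h b) := by
    simp only [hh]
    rw [Matrix.mulVec_mulVec, hinv b, add_neg_cancel, zero_smul, exp_zero, Matrix.one_mulVec]
  have hib : h b = h a + ∫ s in a..b, c • (E s).mulVec B := by rw [key]; abel
  have hpull : (exp (b • A)).mulVec (∫ s in a..b, (E s).mulVec B) =
      ∫ s in a..b, (exp ((b - s) • A)).mulVec B := by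
    have hcomm := (mulVecCLM n (exp (b • A))).intervalIntegral_comp_comm
      (hBc.intervalIntegrable (μ := volume) a b)
    simp only [mulVecCLM_apply] at hcomm
    rw [← hcomm]
    congr 1; funext s
    rw [Matrix.mulVec_mulVec, ← expAdd, show b + -s = b - s from rfl]
  rw [hxb, hib, Matrix.mulVec_add, intervalIntegral.integral_smul, Matrix.mulVec_smul,
    hpull]
  congr 1
  · simp only [hh]
    rw [Matrix.mulVec_mulVec, ← expAdd, show b + -a = b - a from rfl]
  · congr 1
    rw [intervalIntegral.integral_comp_sub_left (fun τ => (exp (τ • A)).mulVec B) b]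
    simp
end aux

attribute [local instance] Matrix.normedAddCommGroup Matrix.normedSpace

open NormedSpace in
/-- Exact d-step-ahead state predictor for ẋ(t) = A·x(t) + u(t − φ)·B under a
zero-order hold on the input, with delay φ = d·T_s: with Φ = exp(T_s·A) and
Γ = (∫_0^{T_s} exp(σ·A) dσ)·B, we have
x(k·T_s + d·T_s) = Φ^d·x(k·T_s) + ∑_{j=1}^{d} Φ^{j−1}·Γ·u(k·T_s − j·T_s). -/
theorem stmt_14 {n : Type*} [Fintype n] [DecidableEq n]
    (A : Matrix n n ℝ) (B : n → ℝ) (T_s : ℝ) (hT_s : 0 < T_s) (d : ℕ) (φ : ℝ)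
    (hφ : φ = d * T_s) (u : ℝ → ℝ)
    (hzoh : ∀ (k : ℤ) (t : ℝ), (k : ℝ) * T_s ≤ t → t < ((k : ℝ) + 1) * T_s →
      u t = u ((k : ℝ) * T_s))
    (x : ℝ → n → ℝ)
    (hode : ∀ t : ℝ, HasDerivAt x (A.mulVec (x t) + u (t - φ) • B) t)
    (Φ : Matrix n n ℝ) (hΦ : Φ = exp (T_s • A)) (Γ : n → ℝ)
    (hΓ : Γ = (∫ σ in (0 : ℝ)..T_s, exp (σ • A)).mulVec B) :
    ∀ k : ℤ, x ((k : ℝ) * T_s + (d : ℝ) * T_s) =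
      (Φ ^ d).mulVec (x ((k : ℝ) * T_s)) +
        ∑ j ∈ Finset.Icc 1 d,
          u ((k : ℝ) * T_s - (j : ℝ) * T_s) • (Φ ^ (j - 1)).mulVec Γ := by
  intro k
  -- Γ as a vector-valued integral
  have hΓ' : Γ = ∫ σ in (0:ℝ)..T_s, (exp (σ • A)).mulVec B := by
    rw [hΓ]
    let L : Matrix n n ℝ →L[ℝ] (n → ℝ) := LinearMap.toContinuousLinearMap
      { toFun := fun M : Matrix n n ℝ => M.mulVec B
        map_add' := fun M N => by simp [Matrix.add_mulVec]
        map_smul' := fun c M => by simp [Matrix.smul_mulVec] }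
    have hii : @IntervalIntegrable (Matrix n n ℝ) _ NormedAddCommGroup.toENormedAddCommMonoid.toENormedAddMonoid (fun σ : ℝ => exp (σ • A)) MeasureTheory.volume 0 T_s :=
      (contExpSmul A).intervalIntegrable 0 T_s
    have hcomm := L.intervalIntegral_comp_comm hii
    have hL : ∀ M : Matrix n n ℝ, L M = M.mulVec B := fun _ => rfl
    exact hcomm.symm
  -- single ZOH step
  have onestep : ∀ m : ℤ, x ((m : ℝ) * T_s + T_s) =
      Φ.mulVec (x ((m : ℝ) * T_s)) + u ((m : ℝ) * T_s - φ) •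
        ∫ σ in (0:ℝ)..T_s, (exp (σ • A)).mulVec B := by
    intro m
    have hc : ∀ t ∈ Set.Ico ((m : ℝ) * T_s) ((m : ℝ) * T_s + T_s), u (t - φ) = u ((m : ℝ) * T_s - φ) := by
      intro t ht
      have h1 : ((m - d : ℤ) : ℝ) * T_s ≤ t - φ := by
        push_cast; rw [hφ]; nlinarith [ht.1]
      have h2 : t - φ < (((m - d : ℤ) : ℝ) + 1) * T_s := by
        push_cast; rw [hφ]; nlinarith [ht.2]
      rw [hzoh (m - d) (t - φ) h1 h2]
      congr 1
      push_cast; rw [hφ]; ring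
    have := step_core A B φ u x hode ((m : ℝ) * T_s) ((m : ℝ) * T_s + T_s)
      (by linarith) (u ((m : ℝ) * T_s - φ)) hc
    simpa [hΦ] using this
  -- induction on number of steps
  have main : ∀ i : ℕ, x ((k : ℝ) * T_s + (i : ℝ) * T_s) =
      (Φ ^ i).mulVec (x ((k : ℝ) * T_s)) +
        ∑ j ∈ Finset.range i,
          u ((k : ℝ) * T_s + (j : ℝ) * T_s - φ) • (Φ ^ (i - 1 - j)).mulVec Γ := by
    intro i
    induction i with
    | zero => simp [Matrix.one_mulVec]
    | succ i ih =>
      have harg : (k : ℝ) * T_s + ((i : ℕ) + 1 : ℕ) * T_s = ((k + i : ℤ) : ℝ) * T_s + T_s := by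
        push_cast; ring
      have harg2 : ((k + i : ℤ) : ℝ) * T_s = (k : ℝ) * T_s + (i : ℝ) * T_s := by
        push_cast; ring
      rw [harg, onestep (k + i), harg2, ← hΓ', ih, Matrix.mulVec_add]
      rw [Matrix.mulVec_mulVec, ← pow_succ']
      have hms : Φ.mulVec (∑ j ∈ Finset.range i,
          u ((k : ℝ) * T_s + (j : ℝ) * T_s - φ) • (Φ ^ (i - 1 - j)).mulVec Γ) =
          ∑ j ∈ Finset.range i,
          u ((k : ℝ) * T_s + (j : ℝ) * T_s - φ) • (Φ ^ (i + 1 - 1 - j)).mulVec Γ := by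
        rw [show Φ.mulVec = Matrix.mulVecLin Φ from rfl, map_sum]
        apply Finset.sum_congr rfl
        intro j hj
        have hji : j < i := Finset.mem_range.1 hj
        rw [_root_.map_smul, Matrix.mulVecLin_apply, Matrix.mulVec_mulVec, ← pow_succ']
        have he : i - 1 - j + 1 = i + 1 - 1 - j := by omega
        rw [he]
      rw [hms, Finset.sum_range_succ]
      have : i + 1 - 1 - i = 0 := by omega
      rw [this, pow_zero, Matrix.one_mulVec]
      abel
  have := main d
  rw [this]
  congr 1
  -- reindex the sum
  rw [← Finset.Ico_add_one_right_eq_Icc, Finset.sum_Ico_eq_sum_range, ← Finset.sum_range_reflect]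
  apply Finset.sum_congr rfl
  intro j hj
  have hjd : j < d := Finset.mem_range.1 hj
  have h1 : d - 1 - (d - 1 - j) = j := by omega
  have h2 : ((d - 1 - j : ℕ) : ℝ) = (d : ℝ) - 1 - (j : ℝ) := by
    have : (1 : ℕ) + j ≤ d := by omega
    push_cast [Nat.cast_sub (by omega : j ≤ d - 1), Nat.cast_sub (by omega : 1 ≤ d)]
    ring
  have h3 : (1 + j) - 1 = j := by omega
  rw [h1, h3, h2]
  congr 2
  rw [hφ]
  push_cast
  ring
end
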